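/- arXiv:2109.01930 — 3 statements merged into one kernel-verified Lean document; each statement's English description precedes it below -/
import Mathlib

section
/- Let G be a connected finite graph with edge set E (at least two vertices) and let D be its incidence matrix with one row removed. Then R^E = [0,1]^E + (im(D^T) ∩ Z^E) + ker(D), i.e., every vector in R^E can be written as a sum of a point of the unit cube, an integral vector in the row space of D, and a vector in the kernel of D. -/
open Function

namespace GB

structure Graph where
  V : Type
  E : Type
  [fV : Fintype V]
  [fE : Fintype E]
  [dV : DecidableEq V]
  [dE : DecidableEq E]
  tail : E → V
  head : E → V

attribute [instance] Graph.fV Graph.fE Graph.dV Graph.dE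

variable (G : Graph)

/-- Incidence matrix with respect to the reference orientation. -/
def incMat : Matrix G.V G.E ℝ := fun v e =>
  (if G.head e = v then 1 else 0) - (if G.tail e = v then 1 else 0)

/-- The incidence linear map. -/
noncomputable def DMap : (G.E → ℝ) →ₗ[ℝ] (G.V → ℝ) := (incMat G).mulVecLin

/-- Cycle space: kernel of the incidence matrix (equal to ker of D with a row removed). -/
noncomputable def cycleSpace : Submodule ℝ (G.E → ℝ) := LinearMap.ker (DMap G)

/-- Cocycle space: row space of the incidence matrix (= im(D^T) for connected G). -/
noncomputable def cocycleSpace : Submodule ℝ (G.E → ℝ) :=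
  LinearMap.range ((incMat G).transpose.mulVecLin)

def Connected : Prop :=
  ∀ f : G.V → ℝ, (∀ e, f (G.head e) = f (G.tail e)) → ∀ v w, f v = f w

/-- a {0,±1}-vector -/
def IsZPM (x : G.E → ℝ) : Prop := ∀ e, x e = 0 ∨ x e = 1 ∨ x e = -1

/-- A directed cycle, identified with a support-minimal nonzero {0,±1}-vector of the
cycle space (a signed circuit of the graphic matroid). -/
def IsDirCycle (x : G.E → ℝ) : Prop :=
  x ∈ cycleSpace G ∧ x ≠ 0 ∧ IsZPM G x ∧
    ∀ y ∈ cycleSpace G, y ≠ 0 → support y ⊆ support x → support y = support x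

/-- A directed cocycle (signed cocircuit). -/
def IsDirCocycle (x : G.E → ℝ) : Prop :=
  x ∈ cocycleSpace G ∧ x ≠ 0 ∧ IsZPM G x ∧
    ∀ y ∈ cocycleSpace G, y ≠ 0 → support y ⊆ support x → support y = support x

def IsCycle (C : Set G.E) : Prop := ∃ x, IsDirCycle G x ∧ support x = C
def IsCocycle (C : Set G.E) : Prop := ∃ x, IsDirCocycle G x ∧ support x = C

/-- Orientations are identified with {0,1}-vectors, (1,…,1) being the reference orientation. -/
def IsOrientation (O : G.E → ℝ) : Prop := ∀ e, O e = 0 ∨ O e = 1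

/-- the ±1 direction of edge e in orientation O -/
def dir (O : G.E → ℝ) (e : G.E) : ℝ := 2 * O e - 1

/-- the signed vector x (e.g. a directed cycle or partial orientation) is contained in O -/
def InOrient (x O : G.E → ℝ) : Prop := ∀ e, x e = 0 ∨ x e = dir G O e

def IsIntVec (x : G.E → ℝ) : Prop := ∀ e, ∃ n : ℤ, x e = (n : ℝ)

/-- x is a sum of pairwise edge-disjoint directed cycles -/
def SumDisjDirCycles (x : G.E → ℝ) : Prop :=
  ∃ (n : ℕ) (c : Fin n → (G.E → ℝ)), (∀ i, IsDirCycle G (c i)) ∧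
    (∀ i j, i ≠ j → Disjoint (support (c i)) (support (c j))) ∧ x = ∑ i, c i

/-- x is a sum of pairwise edge-disjoint directed cocycles -/
def SumDisjDirCocycles (x : G.E → ℝ) : Prop :=
  ∃ (n : ℕ) (c : Fin n → (G.E → ℝ)), (∀ i, IsDirCocycle G (c i)) ∧
    (∀ i j, i ≠ j → Disjoint (support (c i)) (support (c j))) ∧ x = ∑ i, c i

/-- A cycle signature: a choice of direction for each cycle. -/
structure CycSig (G : Graph) where
  s : Set G.E → (G.E → ℝ)
  mem : ∀ C, IsCycle G C → IsDirCycle G (s C) ∧ support (s C) = C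

/-- A cocycle signature. -/
structure CocycSig (G : Graph) where
  s : Set G.E → (G.E → ℝ)
  mem : ∀ C, IsCocycle G C → IsDirCocycle G (s C) ∧ support (s C) = C

open Classical in
/-- σ is acyclic: no nontrivial nonnegative combination of the σ(C) vanishes. -/
noncomputable def AcyclicSig (σ : CycSig G) : Prop :=
  ∀ a : Set G.E → ℝ, (∀ C, 0 ≤ a C) →
    ∑ C ∈ Finset.univ.filter (fun C => IsCycle G C), a C • σ.s C = 0 →
    ∀ C, IsCycle G C → a C = 0

open Classical in
noncomputable def AcyclicCosig (σ : CocycSig G) : Prop :=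
  ∀ a : Set G.E → ℝ, (∀ C, 0 ≤ a C) →
    ∑ C ∈ Finset.univ.filter (fun C => IsCocycle G C), a C • σ.s C = 0 →
    ∀ C, IsCocycle G C → a C = 0

/-- O is σ-compatible: every directed cycle in O is the chosen one. -/
def SigCompatible (σ : CycSig G) (O : G.E → ℝ) : Prop :=
  ∀ x, IsDirCycle G x → InOrient G x O → x = σ.s (support x)

def CosigCompatible (σ : CocycSig G) (O : G.E → ℝ) : Prop :=
  ∀ x, IsDirCocycle G x → InOrient G x O → x = σ.s (support x)

def Compatible (σc : CycSig G) (σs : CocycSig G) (O : G.E → ℝ) : Prop :=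
  SigCompatible G σc O ∧ CosigCompatible G σs O

/-- one step of cycle reversal -/
def CycRev (O O' : G.E → ℝ) : Prop :=
  ∃ x, IsDirCycle G x ∧ InOrient G x O ∧ O' = O - x

/-- cycle reversal equivalence -/
def SameCycClass : (G.E → ℝ) → (G.E → ℝ) → Prop := Relation.EqvGen (CycRev G)

/-- one step of cycle or cocycle reversal -/
def CCRev (O O' : G.E → ℝ) : Prop :=
  ∃ x, (IsDirCycle G x ∨ IsDirCocycle G x) ∧ InOrient G x O ∧ O' = O - x

/-- cycle-cocycle reversal equivalence -/
def SameCCClass : (G.E → ℝ) → (G.E → ℝ) → Prop := Relation.EqvGen (CCRev G)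

/-- x is the directed fundamental cycle of e ∉ T, directed along the reference arc of e -/
def FundCycle (T : Finset G.E) (e : G.E) (x : G.E → ℝ) : Prop :=
  IsDirCycle G x ∧ x e = 1 ∧ support x ⊆ insert e (↑T : Set G.E)

/-- x is the directed fundamental cocycle of e ∈ T -/
def FundCocycle (T : Finset G.E) (e : G.E) (x : G.E → ℝ) : Prop :=
  IsDirCocycle G x ∧ x e = 1 ∧ support x ⊆ insert e ((↑T : Set G.E)ᶜ)

/-- T is a spanning tree: it contains no cycle and its complement contains no cocycle. -/
def IsSpanningTree (T : Finset G.E) : Prop :=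
  (∀ x, IsDirCycle G x → ¬ support x ⊆ (↑T : Set G.E)) ∧
  (∀ x, IsDirCocycle G x → ¬ support x ⊆ ((↑T : Set G.E)ᶜ))

/-- O = g_{σ,σ*}(T): each e ∉ T is oriented along σ(C(T,e)), each e ∈ T along σ*(C*(T,e)). -/
def GOrient (σc : CycSig G) (σs : CocycSig G) (T : Finset G.E) (O : G.E → ℝ) : Prop :=
  IsOrientation G O ∧
  (∀ e ∉ T, ∀ x, FundCycle G T e x → dir G O e = σc.s (support x) e) ∧
  (∀ e ∈ T, ∀ x, FundCocycle G T e x → dir G O e = σs.s (support x) e)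

/-- φ_{σ,σ*}(O) = S : O is obtained from the compatible orientation O^cp = g(T) by reversing
disjoint directed cycles c i and cocycles d j, and S = T ∪ (⊎ C_i) \ (⊎ C*_j). -/
def PhiRel (σc : CycSig G) (σs : CocycSig G) (O : G.E → ℝ) (S : Set G.E) : Prop :=
  ∃ (T : Finset G.E) (Ocp : G.E → ℝ) (n m : ℕ)
    (c : Fin n → (G.E → ℝ)) (d : Fin m → (G.E → ℝ)),
    IsSpanningTree G T ∧ Compatible G σc σs Ocp ∧ GOrient G σc σs T Ocp ∧
    (∀ i, IsDirCycle G (c i) ∧ InOrient G (c i) Ocp) ∧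
    (∀ j, IsDirCocycle G (d j) ∧ InOrient G (d j) Ocp) ∧
    (∀ i j, i ≠ j → Disjoint (support (c i)) (support (c j))) ∧
    (∀ i j, i ≠ j → Disjoint (support (d i)) (support (d j))) ∧
    (∀ i j, Disjoint (support (c i)) (support (d j))) ∧
    O = Ocp - (∑ i, c i) - (∑ j, d j) ∧
    S = ((↑T : Set G.E) ∪ (⋃ i, support (c i))) \ (⋃ j, support (d j))


/-- the cube of continuous orientations -/
def cube : Set (G.E → ℝ) := {x | ∀ e, 0 ≤ x e ∧ x e ≤ 1}

/-- x is a σ-compatible continuous orientation -/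
def ContSigCompat (σ : CycSig G) (x : G.E → ℝ) : Prop :=
  x ∈ cube G ∧ ∀ ε : ℝ, 0 < ε → ∀ C, IsCycle G C → x + ε • σ.s C ∉ cube G

/-- S̃_σ = S_σ + (im(D^T) ∩ ℤ^E) -/
def Stilde (σ : CycSig G) : Set (G.E → ℝ) :=
  {x | ∃ s, ContSigCompat G σ s ∧ ∃ v, v ∈ cocycleSpace G ∧ IsIntVec G v ∧ x = s + v}

end GB

/-!
Write `L` for the integral cocycles and `K = ker D` for the cycle space. The set `L + K` is
closed, being the preimage of `L` under the projection onto `im Dᵀ` along `K`. Minimize the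
penalty `P z = ∑ₑ dist(zₑ, [0,1])²` over `z ∈ x - (L + K)`; its sublevel sets are bounded, so a
minimizer `z` exists. Stationarity along `K` makes the half-gradient `overshoot ∘ z` orthogonal
to `K`, hence of the form `Dᵀψ`. If `z` left the cube, `ψ` would be nonconstant, and subtracting
`Dᵀχ`, with `χ` the indicator of the vertices where `ψ` is maximal, would move every edge of the
cut (nonempty by connectivity) one step towards `[0,1]` and strictly decrease `P`.
-/

open Matrix Pointwise

namespace GB

def overshoot (s : ℝ) : ℝ := max (s - 1) 0 - max (-s) 0

lemma overshoot_eq_zero_iff {s : ℝ} : overshoot s = 0 ↔ 0 ≤ s ∧ s ≤ 1 := by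
  unfold overshoot
  simp only [max_def]
  split_ifs <;> constructor <;> intro h <;> first | constructor <;> linarith | linarith [h.1, h.2]

lemma sq_overshoot_add_le (s h : ℝ) :
    overshoot (s + h) ^ 2 ≤ overshoot s ^ 2 + 2 * h * overshoot s + h ^ 2 := by
  unfold overshoot
  simp only [max_def]
  split_ifs <;> nlinarith

lemma abs_le_two_add_sq_overshoot (s : ℝ) : |s| ≤ 2 + overshoot s ^ 2 := by
  unfold overshoot
  simp only [max_def]
  split_ifs <;> cases abs_cases s <;> nlinarith

lemma sq_overshoot_sub_lt {s t : ℝ} (ht : |t| ≤ 1) (h : 0 < t * overshoot s) :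
    overshoot (s - t) ^ 2 < overshoot s ^ 2 := by
  unfold overshoot at *
  simp only [max_def] at *
  cases abs_cases t <;> split_ifs at * <;> nlinarith

section Penalty

variable {ι : Type*} [Fintype ι]

def penalty (z : ι → ℝ) : ℝ := ∑ i, overshoot (z i) ^ 2

lemma penalty_nonneg (z : ι → ℝ) : 0 ≤ penalty z :=
  Finset.sum_nonneg fun _ _ => sq_nonneg _

lemma continuous_penalty : Continuous (penalty : (ι → ℝ) → ℝ) := by
  unfold penalty overshoot
  fun_prop

lemma abs_le_of_penalty_le {z : ι → ℝ} {c : ℝ} (h : penalty z ≤ c) (i : ι) : |z i| ≤ 2 + c :=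
  calc |z i| ≤ 2 + overshoot (z i) ^ 2 := abs_le_two_add_sq_overshoot _
    _ ≤ 2 + c := by
      gcongr
      exact (Finset.single_le_sum (fun j _ => sq_nonneg (overshoot (z j)))
        (Finset.mem_univ i)).trans h

lemma penalty_add_smul_le (z w : ι → ℝ) (t : ℝ) :
    penalty (z + t • w) ≤ penalty z + 2 * (w ⬝ᵥ (overshoot ∘ z)) * t + (w ⬝ᵥ w) * (t * t) := by
  simp only [penalty, dotProduct, Finset.sum_mul, Finset.mul_sum, ← Finset.sum_add_distrib]
  gcongr with i
  calc overshoot (z i + t * w i) ^ 2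
      ≤ overshoot (z i) ^ 2 + 2 * (t * w i) * overshoot (z i) + (t * w i) ^ 2 :=
        sq_overshoot_add_le _ _
    _ = _ := by simp only [Function.comp_apply]; ring

lemma dotProduct_overshoot_eq_zero {z w : ι → ℝ}
    (hmin : ∀ t : ℝ, penalty z ≤ penalty (z + t • w)) : w ⬝ᵥ (overshoot ∘ z) = 0 := by
  have hdisc := discrim_le_zero (a := w ⬝ᵥ w) (b := 2 * (w ⬝ᵥ (overshoot ∘ z))) (c := 0)
    fun t => by linarith [penalty_add_smul_le z w t, hmin t]
  rw [discrim] at hdisc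
  nlinarith

lemma exists_isMinOn_penalty_sub {A : Set (ι → ℝ)} (hA : IsClosed A) (hne : A.Nonempty)
    (x : ι → ℝ) : ∃ a ∈ A, IsMinOn (fun b => penalty (x - b)) A a := by
  obtain ⟨a₀, ha₀⟩ := hne
  have hcont : Continuous fun b => penalty (x - b) :=
    continuous_penalty.comp (continuous_const.sub continuous_id)
  set K := A ∩ {b | penalty (x - b) ≤ penalty (x - a₀)}
  have hK : IsCompact K := by
    refine Metric.isCompact_of_isClosed_isBounded
      (hA.inter (isClosed_le hcont continuous_const)) ?_
    refine (isBounded_iff_forall_norm_le).2 ⟨‖x‖ + (2 + penalty (x - a₀)), fun b hb => ?_⟩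
    have hc : 0 ≤ ‖x‖ + (2 + penalty (x - a₀)) := by
      linarith [norm_nonneg x, penalty_nonneg (x - a₀)]
    refine (pi_norm_le_iff_of_nonneg hc).2 fun i => ?_
    calc ‖b i‖ = |x i - (x - b) i| := by simp [Real.norm_eq_abs]
      _ ≤ |x i| + |(x - b) i| := abs_sub _ _
      _ ≤ ‖x‖ + (2 + penalty (x - a₀)) :=
        add_le_add (norm_le_pi_norm x i) (abs_le_of_penalty_le hb.2 i)
  obtain ⟨a, haK, hmin⟩ :=
    hK.exists_isMinOn ⟨a₀, ha₀, le_refl (penalty (x - a₀))⟩ hcont.continuousOn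
  refine ⟨a, haK.1, fun b hb => ?_⟩
  by_cases hbK : penalty (x - b) ≤ penalty (x - a₀)
  · exact hmin ⟨hb, hbK⟩
  · exact (hmin ⟨ha₀, le_refl (penalty (x - a₀))⟩).trans (le_of_not_ge hbK)

end Penalty

variable {G : Graph}

lemma transpose_incMat_mulVec (ψ : G.V → ℝ) (e : G.E) :
    ((incMat G)ᵀ *ᵥ ψ) e = ψ (G.head e) - ψ (G.tail e) := by
  simp [mulVec, dotProduct, incMat, sub_mul, Finset.sum_sub_distrib]

lemma dotProduct_eq_zero_of_mem_cocycleSpace {v w : G.E → ℝ} (hv : v ∈ cocycleSpace G)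
    (hw : w ∈ cycleSpace G) : v ⬝ᵥ w = 0 := by
  obtain ⟨ψ, rfl⟩ := hv
  have hw : incMat G *ᵥ w = 0 := hw
  rw [mulVecLin_apply, dotProduct_comm, dotProduct_mulVec, vecMul_transpose, hw, zero_dotProduct]

lemma isCompl_cocycleSpace_cycleSpace : IsCompl (cocycleSpace G) (cycleSpace G) := by
  refine (Submodule.isCompl_iff_disjoint _ _ ?_).2 ?_
  · have h := LinearMap.finrank_range_add_finrank_ker (incMat G).mulVecLin
    have hrank : Module.finrank ℝ (cocycleSpace G) = (incMat G).rank := rank_transpose _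
    rw [hrank, cycleSpace, DMap]
    exact h.symm.le
  · refine Submodule.disjoint_def.2 fun v hv hw => ?_
    exact dotProduct_self_eq_zero.1 (dotProduct_eq_zero_of_mem_cocycleSpace hv hw)

lemma mem_cocycleSpace_of_forall_dotProduct_eq_zero {d : G.E → ℝ}
    (h : ∀ w ∈ cycleSpace G, w ⬝ᵥ d = 0) : d ∈ cocycleSpace G := by
  set P := (cocycleSpace G).projection (cycleSpace G) isCompl_cocycleSpace_cycleSpace
  have hq : d - P d ∈ cycleSpace G := Submodule.sub_projection_mem _ d
  have hqq : (d - P d) ⬝ᵥ (d - P d) = 0 := by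
    rw [dotProduct_sub, h _ hq, dotProduct_comm,
      dotProduct_eq_zero_of_mem_cocycleSpace (Submodule.projection_apply_mem _ d) hq, sub_zero]
  rw [sub_eq_zero.1 (dotProduct_self_eq_zero.1 hqq)]
  exact Submodule.projection_apply_mem _ d

variable (G) in
def intCocycles : Set (G.E → ℝ) := {v | v ∈ cocycleSpace G ∧ IsIntVec G v}

lemma add_mem_intCocycles {v v' : G.E → ℝ} (hv : v ∈ intCocycles G) (hv' : v' ∈ intCocycles G) :
    v + v' ∈ intCocycles G := by
  refine ⟨add_mem hv.1 hv'.1, fun e => ?_⟩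
  obtain ⟨m, hm⟩ := hv.2 e
  obtain ⟨n, hn⟩ := hv'.2 e
  exact ⟨m + n, by simp [hm, hn]⟩

lemma isClosed_intCocycles : IsClosed (intCocycles G) := by
  have h : intCocycles G = (cocycleSpace G : Set (G.E → ℝ)) ∩
      ⋂ e, (fun v => v e) ⁻¹' Set.range ((↑) : ℤ → ℝ) := by
    ext v
    simp [intCocycles, IsIntVec, eq_comm]
  rw [h]
  exact (Submodule.closed_of_finiteDimensional _).inter
    (isClosed_iInter fun e => Real.isClosed_range_intCast.preimage (continuous_apply e))

lemma isClosed_intCocycles_add_cycleSpace :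
    IsClosed (intCocycles G + (cycleSpace G : Set (G.E → ℝ))) := by
  set P := (cocycleSpace G).projection (cycleSpace G) isCompl_cocycleSpace_cycleSpace
  have h : intCocycles G + (cycleSpace G : Set (G.E → ℝ)) = P ⁻¹' intCocycles G := by
    ext y
    constructor
    · rintro ⟨v, hv, w, hw, rfl⟩
      rwa [Set.mem_preimage, map_add, Submodule.projection_apply_of_mem_left _ hv.1,
        Submodule.projection_apply_of_mem_right _ hw, add_zero]
    · intro hy
      exact ⟨P y, hy, y - P y, Submodule.sub_projection_mem _ y, add_sub_cancel _ _⟩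
  rw [h]
  exact isClosed_intCocycles.preimage (LinearMap.continuous_of_finiteDimensional P)

lemma overshoot_mem_cocycleSpace_of_isMinOn {x a : G.E → ℝ}
    (ha : a ∈ intCocycles G + (cycleSpace G : Set (G.E → ℝ)))
    (hmin : IsMinOn (fun b => penalty (x - b))
      (intCocycles G + (cycleSpace G : Set (G.E → ℝ))) a) :
    overshoot ∘ (x - a) ∈ cocycleSpace G := by
  refine mem_cocycleSpace_of_forall_dotProduct_eq_zero fun w hw => ?_
  refine dotProduct_overshoot_eq_zero fun t => ?_
  obtain ⟨v, hv, w', hw', rfl⟩ := ha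
  have hmem : v + w' - t • w ∈ intCocycles G + (cycleSpace G : Set (G.E → ℝ)) :=
    ⟨v, hv, w' - t • w, sub_mem hw' (Submodule.smul_mem _ t hw), (add_sub_assoc _ _ _).symm⟩
  have h := isMinOn_iff.1 hmin _ hmem
  rwa [show x - (v + w' - t • w) = x - (v + w') + t • w by abel] at h

lemma penalty_sub_transpose_incMat_mulVec_lt {z : G.E → ℝ} {ψ χ : G.V → ℝ}
    (hd : ∀ e, overshoot (z e) = ψ (G.head e) - ψ (G.tail e))
    (hχ : ∀ a b, χ a ≠ χ b → |χ a - χ b| ≤ 1 ∧ 0 < (χ a - χ b) * (ψ a - ψ b))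
    (hcross : ∃ e, χ (G.head e) ≠ χ (G.tail e)) :
    penalty (z - (incMat G)ᵀ *ᵥ χ) < penalty z := by
  have hedge : ∀ e, χ (G.head e) ≠ χ (G.tail e) →
      overshoot ((z - (incMat G)ᵀ *ᵥ χ) e) ^ 2 < overshoot (z e) ^ 2 := fun e hne => by
    obtain ⟨hle, hpos⟩ := hχ _ _ hne
    rw [Pi.sub_apply, transpose_incMat_mulVec]
    exact sq_overshoot_sub_lt hle (by rw [hd]; exact hpos)
  obtain ⟨e₁, he₁⟩ := hcross
  refine Finset.sum_lt_sum (fun e _ => ?_) ⟨e₁, Finset.mem_univ _, hedge e₁ he₁⟩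
  by_cases hne : χ (G.head e) = χ (G.tail e)
  · rw [Pi.sub_apply, transpose_incMat_mulVec, hne, sub_self, sub_zero]
  · exact (hedge e hne).le

lemma exists_intCocycle_penalty_sub_lt (hconn : Connected G) {z : G.E → ℝ}
    (hz : overshoot ∘ z ∈ cocycleSpace G) (hcube : z ∉ cube G) :
    ∃ v ∈ intCocycles G, penalty (z - v) < penalty z := by
  obtain ⟨ψ, hψ⟩ := hz
  have hd : ∀ e, overshoot (z e) = ψ (G.head e) - ψ (G.tail e) := fun e => by
    rw [← transpose_incMat_mulVec, ← mulVecLin_apply, hψ, Function.comp_apply]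
  obtain ⟨e₀, he₀⟩ : ∃ e, overshoot (z e) ≠ 0 := by
    by_contra! h
    exact hcube fun e => overshoot_eq_zero_iff.1 (h e)
  have : Nonempty G.V := ⟨G.head e₀⟩
  obtain ⟨top, htop⟩ := Finite.exists_max ψ
  set χ : G.V → ℝ := fun u => if ψ u = ψ top then 1 else 0
  have hχ : ∀ a b, χ a ≠ χ b → |χ a - χ b| ≤ 1 ∧ 0 < (χ a - χ b) * (ψ a - ψ b) := by
    intro a b hab
    rcases (htop a).lt_or_eq with ha | ha <;> rcases (htop b).lt_or_eq with hb | hb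
    · simp [χ, ha.ne, hb.ne] at hab
    · simp [χ, ha.ne, hb]
      linarith
    · simp [χ, ha, hb.ne]
      linarith
    · simp [χ, ha, hb] at hab
  have hcross : ∃ e, χ (G.head e) ≠ χ (G.tail e) := by
    by_contra! h
    have hflat : ∀ u, ψ u = ψ top := fun u => by
      simpa [χ] using hconn χ h u top
    exact he₀ (by rw [hd, hflat (G.head e₀), hflat (G.tail e₀), sub_self])
  refine ⟨(incMat G)ᵀ *ᵥ χ, ⟨⟨χ, rfl⟩, fun e => ?_⟩,
    penalty_sub_transpose_incMat_mulVec_lt hd hχ hcross⟩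
  refine ⟨(if ψ (G.head e) = ψ top then 1 else 0) - (if ψ (G.tail e) = ψ top then 1 else 0), ?_⟩
  rw [transpose_incMat_mulVec]
  push_cast
  rfl

lemma sub_mem_cube_of_isMinOn (hconn : Connected G) {x a : G.E → ℝ}
    (ha : a ∈ intCocycles G + (cycleSpace G : Set (G.E → ℝ)))
    (hmin : IsMinOn (fun b => penalty (x - b))
      (intCocycles G + (cycleSpace G : Set (G.E → ℝ))) a) :
    x - a ∈ cube G := by
  by_contra hcube
  obtain ⟨v₀, hv₀, hlt⟩ :=
    exists_intCocycle_penalty_sub_lt hconn (overshoot_mem_cocycleSpace_of_isMinOn ha hmin) hcube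
  obtain ⟨v, hv, w, hw, rfl⟩ := ha
  have hmem : v + v₀ + w ∈ intCocycles G + (cycleSpace G : Set (G.E → ℝ)) :=
    ⟨v + v₀, add_mem_intCocycles hv hv₀, w, hw, rfl⟩
  have hle := isMinOn_iff.1 hmin _ hmem
  rw [show x - (v + v₀ + w) = x - (v + w) - v₀ by abel] at hle
  exact hle.not_gt hlt

end GB

open GB in
theorem stmt_14_general (G : GB.Graph) (hconn : GB.Connected G)
    (x : G.E → ℝ) :
    ∃ u v w : G.E → ℝ, u ∈ GB.cube G ∧ v ∈ GB.cocycleSpace G ∧ GB.IsIntVec G v ∧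
      w ∈ GB.cycleSpace G ∧ x = u + v + w := by
  obtain ⟨a, ha, hmin⟩ := exists_isMinOn_penalty_sub isClosed_intCocycles_add_cycleSpace
    ⟨0, 0, ⟨zero_mem _, fun _ => ⟨0, by simp⟩⟩, 0, zero_mem _, add_zero 0⟩ x
  have hcube := sub_mem_cube_of_isMinOn hconn ha hmin
  obtain ⟨v, ⟨hv, hvint⟩, w, hw, rfl⟩ := ha
  exact ⟨x - (v + w), v, w, hcube, hv, hvint, hw, by abel⟩

open GB in
theorem stmt_14 (G : GB.Graph) (hconn : GB.Connected G) (hV : 1 < Fintype.card G.V)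
    (x : G.E → ℝ) :
    ∃ u v w : G.E → ℝ, u ∈ GB.cube G ∧ v ∈ GB.cocycleSpace G ∧ GB.IsIntVec G v ∧
      w ∈ GB.cycleSpace G ∧ x = u + v + w :=
  stmt_14_general G hconn x
end

section
/- Let σ be an acyclic cycle signature of a connected finite graph G. Then S̃_σ ∩ [0,1]^E = S_σ, i.e., a continuous orientation that can be written as a σ-compatible continuous orientation plus an integral vector of im(D^T) must itself be σ-compatible. -/
open Function

open GB in
theorem stmt_16 (G : GB.Graph) (hconn : GB.Connected G) (hV : 1 < Fintype.card G.V)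
    (σ : GB.CycSig G) (hac : GB.AcyclicSig G σ) :
    ∀ x : G.E → ℝ, (x ∈ GB.Stilde G σ ∧ x ∈ GB.cube G) ↔ GB.ContSigCompat G σ x := by
  intro x
  constructor
  · rintro ⟨⟨s, hs, v, hvmem, hvint, rfl⟩, hx⟩
    refine ⟨hx, ?_⟩
    intro ε hε C hC hmem
    obtain ⟨hσdc, hσsupp⟩ := σ.mem C hC
    obtain ⟨hσcyc, hσne, hσzpm, hσmin⟩ := hσdc
    -- orthogonality of cycle and cocycle vectors
    obtain ⟨w, hw⟩ := hvmem
    have horth : ∑ e, σ.s C e * v e = 0 := by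
      have h1 : dotProduct (σ.s C) v = 0 := by
        rw [← hw]
        show dotProduct (σ.s C) (Matrix.mulVec (Matrix.transpose (GB.incMat G)) w) = 0
        rw [Matrix.dotProduct_mulVec, Matrix.vecMul_transpose]
        have h0 : Matrix.mulVec (GB.incMat G) (σ.s C) = 0 := hσcyc
        rw [h0, zero_dotProduct]
      simpa [dotProduct] using h1
    by_cases hA : ∃ e, 0 < σ.s C e * v e
    · obtain ⟨e, he⟩ := hA
      obtain ⟨n, hn⟩ := hvint e
      have hcube := hmem e
      have hxe := hx e
      have hse := hs.1 e
      rcases hσzpm e with h0 | h1 | hm1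
      · rw [h0, zero_mul] at he; exact lt_irrefl 0 he
      · -- v e ≥ 1
        rw [h1, one_mul] at he
        have hn1 : (1 : ℝ) ≤ v e := by
          rw [hn] at he ⊢
          exact_mod_cast Int.cast_pos.mp he
        have h2 : s e + v e + ε * σ.s C e ≤ 1 := hcube.2
        rw [h1] at h2
        linarith [hse.1]
      · rw [hm1] at he
        have hn1 : v e ≤ -1 := by
          rw [hn] at he ⊢
          have h4 : (n : ℝ) < 0 := by linarith
          have h5 : n < 0 := by exact_mod_cast h4
          have h6 : n ≤ -1 := by omega
          calc (n:ℝ) ≤ ((-1 : ℤ) : ℝ) := by exact_mod_cast h6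
            _ = -1 := by norm_num
        have h2 : (0:ℝ) ≤ s e + v e + ε * σ.s C e := hcube.1
        rw [hm1] at h2
        linarith [hse.2]
    · push_neg at hA
      have hall : ∀ e, σ.s C e * v e = 0 := by
        intro e
        by_contra hne
        have hlt : σ.s C e * v e < 0 := lt_of_le_of_ne (hA e) hne
        have hsum : ∑ e', σ.s C e' * v e' < 0 :=
          Finset.sum_neg' (fun e' _ => hA e') ⟨e, Finset.mem_univ e, hlt⟩
        rw [horth] at hsum; exact lt_irrefl 0 hsum
      apply hs.2 ε hε C hC
      intro e
      have hcube := hmem e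
      rcases hσzpm e with h0 | h1 | hm1
      · simpa [h0] using hs.1 e
      · have hv0 : v e = 0 := by have := hall e; rw [h1, one_mul] at this; exact this
        have h2 : s e + v e + ε * σ.s C e ≤ 1 := hcube.2
        have h3 : (0:ℝ) ≤ s e + v e + ε * σ.s C e := hcube.1
        rw [hv0] at h2 h3
        constructor
        · show (0:ℝ) ≤ s e + ε * σ.s C e; linarith
        · show s e + ε * σ.s C e ≤ 1; linarith
      · have hv0 : v e = 0 := by
          have := hall e; rw [hm1] at this; linarith
        have h2 : s e + v e + ε * σ.s C e ≤ 1 := hcube.2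
        have h3 : (0:ℝ) ≤ s e + v e + ε * σ.s C e := hcube.1
        rw [hv0] at h2 h3
        constructor
        · show (0:ℝ) ≤ s e + ε * σ.s C e; linarith
        · show s e + ε * σ.s C e ≤ 1; linarith
  · intro hcs
    refine ⟨⟨x, hcs, 0, (GB.cocycleSpace G).zero_mem, fun e => ⟨0, by simp⟩, by simp⟩, hcs.1⟩
end

section
/- Let E be a finite set and φ : {0,1}^E → 2^E a map such that [0,1]^E = ⊎_{O⃗∈{0,1}^E} hoc(O⃗, φ(O⃗)) (a half-open decomposition of the cube). Then the same holds for the complementary map φ* defined by φ*(O⃗) = E \ φ(O⃗): that is, [0,1]^E = ⊎_{O⃗∈{0,1}^E} hoc(O⃗, φ*(O⃗)). -/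
/-!
For `x` in the cube, `x ∈ hoc O S` iff `S` contains the set `F` of coordinates with
`0 < x e < 1` and `O` agrees off `F` with the vertex nearest to `x`. So a half-open decomposition
`φ` is the same as the choice, on every face of the cube (free coordinates `F`, fixed values `b`
off `F`), of exactly one vertex `O` with `F ⊆ φ O`. For `φ*` we must count the vertices `O` of
such a face with `F ∩ φ O = ∅`. By inclusion–exclusion over `G ⊆ F ∩ φ O` this count is
`∑_{G ⊆ F} (-1)^|G| · #{O : G ⊆ φ O}`, and the vertices with `G ⊆ φ O` are in bijection with
the `2^|F \ G|` subfaces spanned by `G`, one for each vertex; so the count is `(2 - 1)^|F| = 1`.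
-/

open Classical in
noncomputable def hoc {ι : Type*} (O : ι → Bool) (S : Set ι) : Set (ι → ℝ) :=
  {x | ∀ e, if e ∈ S then
        (if O e then x e ∈ Set.Ioc (0:ℝ) 1 else x e ∈ Set.Ico (0:ℝ) 1)
      else x e = (if O e then 1 else 0)}

open Finset

lemma hoc_coord_iff {t : ℝ} (ht : 0 ≤ t ∧ t ≤ 1) (p : Prop) [Decidable p] (o : Bool) :
    (if p then (if o then t ∈ Set.Ioc (0:ℝ) 1 else t ∈ Set.Ico (0:ℝ) 1)
      else t = (if o then 1 else 0)) ↔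
      (t ∈ Set.Ioo 0 1 → p) ∧ (t ∉ Set.Ioo 0 1 → o = decide (t = 1)) := by
  obtain ⟨h0, h1⟩ := ht
  rcases h0.eq_or_lt with rfl | h0
  · by_cases hp : p <;> cases o <;> simp [hp]
  rcases h1.lt_or_eq with h1 | rfl
  · by_cases hp : p <;> cases o <;> simp [hp, h0, h1, h0.le, h1.le, h0.ne', h1.ne]
  · by_cases hp : p <;> cases o <;> simp [hp]

section

variable {ι : Type*} [Fintype ι]

open Classical in
noncomputable def fracSupport (x : ι → ℝ) : Finset ι := {e | x e ∈ Set.Ioo 0 1}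

lemma mem_hoc_iff {x : ι → ℝ} (hx : ∀ e, 0 ≤ x e ∧ x e ≤ 1) (O : ι → Bool) (S : Set ι) :
    x ∈ hoc O S ↔
      ↑(fracSupport x) ⊆ S ∧ ∀ e ∉ fracSupport x, O e = decide (x e = 1) := by
  simp only [hoc, Set.mem_ofPred_eq, hoc_coord_iff (hx _), forall_and, fracSupport,
    Set.subset_def, coe_filter, mem_filter, mem_univ, true_and]

def IsFaceDecomposition (φ : (ι → Bool) → Set ι) : Prop :=
  ∀ (G : Finset ι) (c : ι → Bool), ∃! O : ι → Bool, (↑G : Set ι) ⊆ φ O ∧ ∀ e ∉ G, O e = c e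

variable {φ : (ι → Bool) → Set ι}

theorem isFaceDecomposition_iff :
    IsFaceDecomposition φ ↔
      ∀ x : ι → ℝ, (∀ e, 0 ≤ x e ∧ x e ≤ 1) → ∃! O : ι → Bool, x ∈ hoc O (φ O) := by
  classical
  constructor
  · intro hφ x hx
    simpa only [mem_hoc_iff hx] using hφ (fracSupport x) fun e => decide (x e = 1)
  · intro h G c
    set y : ι → ℝ := fun e => if e ∈ G then 1 / 2 else if c e then 1 else 0
    have hy : ∀ e, 0 ≤ y e ∧ y e ≤ 1 := by
      intro e; simp only [y]; split_ifs <;> norm_num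
    have hyG : fracSupport y = G := by
      ext e; simp only [fracSupport, mem_filter, mem_univ, true_and, y]; split_ifs <;> norm_num [*]
    have hyc : ∀ e ∉ G, decide (y e = 1) = c e := by
      intro e he; cases hc : c e <;> simp [y, he, hc]
    refine (existsUnique_congr fun O => ?_).mp (h y hy)
    rw [mem_hoc_iff hy, hyG]
    exact and_congr_right fun _ => forall₂_congr fun e he => by rw [hyc e he]

open Classical in
lemma IsFaceDecomposition.card_vertices_subset (hφ : IsFaceDecomposition φ) {F G : Finset ι}
    (hGF : G ⊆ F) (b : ι → Bool) :
    #{O | (∀ e ∉ F, O e = b e) ∧ ↑G ⊆ φ O} = 2 ^ #(F \ G) := by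
  rw [← card_powerset]
  refine card_bij (fun O _ => {e ∈ F \ G | O e}) (fun _ _ => mem_powerset.2 (filter_subset _ _))
    ?_ ?_
  · intro O₁ h₁ O₂ h₂ hT
    simp only [mem_filter, mem_univ, true_and] at h₁ h₂
    refine (hφ G O₂).unique ⟨h₁.2, fun e heG => ?_⟩ ⟨h₂.2, fun _ _ => rfl⟩
    by_cases heF : e ∈ F
    · have := congrArg (e ∈ ·) hT
      simp only [mem_filter, mem_sdiff, heF, heG, not_false_eq_true, and_self, true_and,
        eq_iff_iff] at this
      exact Bool.eq_iff_iff.2 this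
    · rw [h₁.1 e heF, h₂.1 e heF]
  · intro T hT
    rw [mem_powerset] at hT
    obtain ⟨O, ⟨hGO, hOc⟩, -⟩ := hφ G fun e => if e ∈ F then decide (e ∈ T) else b e
    refine ⟨O, ?_, ?_⟩
    · simp only [mem_filter, mem_univ, true_and]
      exact ⟨fun e heF => by rw [hOc e fun heG => heF (hGF heG), if_neg heF], hGO⟩
    · ext e
      simp only [mem_filter]
      constructor
      · rintro ⟨he, hOe⟩
        rw [hOc e (mem_sdiff.1 he).2, if_pos (mem_sdiff.1 he).1] at hOe
        simpa using hOe
      · intro he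
        have he' := hT he
        rw [hOc e (mem_sdiff.1 he').2, if_pos (mem_sdiff.1 he').1]
        simpa [he'] using he

theorem IsFaceDecomposition.compl (hφ : IsFaceDecomposition φ) :
    IsFaceDecomposition fun O => (φ O)ᶜ := by
  classical
  intro F b
  rw [Fintype.existsUnique_iff_card_one]
  have hcount : (#{O | ↑F ⊆ (φ O)ᶜ ∧ ∀ e ∉ F, O e = b e} : ℤ) = 1 :=
    calc (#{O | ↑F ⊆ (φ O)ᶜ ∧ ∀ e ∉ F, O e = b e} : ℤ)
        = ∑ O with ∀ e ∉ F, O e = b e, ∑ G ∈ {e ∈ F | e ∈ φ O}.powerset, (-1 : ℤ) ^ #G := by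
          simp only [sum_powerset_neg_one_pow_card, sum_boole, filter_filter,
            filter_eq_empty_iff, Set.subset_compl_iff_disjoint_right, Set.disjoint_left, mem_coe]
          congr 2
          ext O
          simp only [mem_filter, mem_univ, true_and]
          exact and_comm
      _ = ∑ G ∈ F.powerset, ∑ O with (∀ e ∉ F, O e = b e) ∧ ↑G ⊆ φ O, (-1 : ℤ) ^ #G := by
          refine sum_comm' fun O G => ?_
          simp only [mem_filter, mem_univ, true_and, mem_powerset, subset_iff, Set.subset_def,
            mem_coe, imp_and, forall_and]
          tauto
      _ = ∑ G ∈ F.powerset, (-1 : ℤ) ^ #G * 2 ^ (#F - #G) := by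
          refine sum_congr rfl fun G hG => ?_
          rw [sum_const, hφ.card_vertices_subset (mem_powerset.1 hG),
            card_sdiff_of_subset (mem_powerset.1 hG), nsmul_eq_mul, mul_comm]
          norm_cast
      _ = 1 := by rw [sum_pow_mul_eq_add_pow]; norm_num
  exact_mod_cast hcount

end

theorem stmt_19 (ι : Type*) [Fintype ι] (φ : (ι → Bool) → Set ι)
    (h : ∀ x : ι → ℝ, (∀ e, 0 ≤ x e ∧ x e ≤ 1) → ∃! O : ι → Bool, x ∈ hoc O (φ O)) :
    ∀ x : ι → ℝ, (∀ e, 0 ≤ x e ∧ x e ≤ 1) → ∃! O : ι → Bool, x ∈ hoc O ((φ O)ᶜ) :=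
  isFaceDecomposition_iff.1 (isFaceDecomposition_iff.2 h).compl
end
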